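/- (First Theorem of Dupin, convexity of the surface of centers.) Let d ≥ 2, let K ⊆ ℝ^d be a convex body and let δ ∈ (0, vol(K)). Then no point of the surface of centers lies in the interior of its convex hull: for every unit vector ξ ∈ S^{d−1}, C_δ(ξ) ∉ interior(convexHull(S_δ)); equivalently, S_δ is contained in the topological boundary of the convex hull of S_δ. -/

import Mathlib

open MeasureTheory Metric Set Filter
open scoped InnerProductSpace ENNReal Pointwise NNReal Topology

/-- The center of mass of a set `L` with respect to a measure `μ`. -/
noncomputable def centroid {d : ℕ} (μ : Measure (EuclideanSpace ℝ (Fin d)))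
    (L : Set (EuclideanSpace ℝ (Fin d))) : EuclideanSpace ℝ (Fin d) :=
  (μ L).toReal⁻¹ • ∫ x in L, x ∂μ

/-!
Among all subsets of `K` with the same volume, the submerged part `K ∩ {⟪p, ξ⟫ ≤ t ξ}` has the
least moment `∫ ⟪ξ, x⟫`: passing from it to another such set trades points below the level
`t ξ` for equally much volume above it. Hence every center of buoyancy, and with it the convex
hull of the surface of centers, lies in the half-space `{x | ⟪ξ, C_δ(ξ)⟫ ≤ ⟪ξ, x⟫}`, on whose
boundary `C_δ(ξ)` sits.
-/

theorem setIntegral_le_setIntegral_of_measure_eq {α : Type*} [MeasurableSpace α]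
    {μ : Measure α} {f : α → ℝ} {S T : Set α} {a : ℝ}
    (hS : MeasurableSet S) (hT : MeasurableSet T) (hST : μ S = μ T) (hfin : μ S ≠ ∞)
    (hfS : IntegrableOn f S μ) (hfT : IntegrableOn f T μ)
    (hle : ∀ x ∈ S \ T, f x ≤ a) (hge : ∀ x ∈ T \ S, a ≤ f x) :
    ∫ x in S, f x ∂μ ≤ ∫ x in T, f x ∂μ := by
  have hdiff : μ (S \ T) = μ (T \ S) := by
    have hfin' : μ (S ∩ T) ≠ ∞ := measure_ne_top_of_subset inter_subset_left hfin
    refine (ENNReal.add_right_inj hfin').mp ?_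
    rw [measure_inter_add_sdiff S hT, inter_comm, measure_inter_add_sdiff T hS, hST]
  calc ∫ x in S, f x ∂μ = ∫ x in S ∩ T, f x ∂μ + ∫ x in S \ T, f x ∂μ :=
        (integral_inter_add_sdiff hT hfS).symm
    _ ≤ ∫ x in S ∩ T, f x ∂μ + ∫ x in T \ S, f x ∂μ := by
        gcongr ∫ x in S ∩ T, f x ∂μ + ?_
        calc ∫ x in S \ T, f x ∂μ ≤ ∫ _ in S \ T, a ∂μ :=
              setIntegral_mono_on (hfS.mono_set sdiff_subset)
                (integrableOn_const (measure_ne_top_of_subset sdiff_subset hfin)) (hS.diff hT) hle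
          _ = ∫ _ in T \ S, a ∂μ := by simp only [setIntegral_const, Measure.real, hdiff]
          _ ≤ ∫ x in T \ S, f x ∂μ :=
              setIntegral_mono_on (integrableOn_const (hdiff ▸ measure_ne_top_of_subset
                sdiff_subset hfin)) (hfT.mono_set sdiff_subset) (hT.diff hS) hge
    _ = ∫ x in T, f x ∂μ := by rw [inter_comm, integral_inter_add_sdiff hS hfT]

theorem inner_centroid {d : ℕ} (μ : Measure (EuclideanSpace ℝ (Fin d)))
    {L : Set (EuclideanSpace ℝ (Fin d))} (hL : IntegrableOn (fun x ↦ x) L μ)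
    (ξ : EuclideanSpace ℝ (Fin d)) :
    ⟪ξ, centroid μ L⟫_ℝ = (μ L).toReal⁻¹ * ∫ x in L, ⟪ξ, x⟫_ℝ ∂μ := by
  rw [centroid, real_inner_smul_right, ← integral_inner hL]

theorem inner_centroid_inter_halfSpace_le {d : ℕ} {μ : Measure (EuclideanSpace ℝ (Fin d))}
    [IsFiniteMeasureOnCompacts μ] {K T : Set (EuclideanSpace ℝ (Fin d))} (hK : IsCompact K)
    (hTK : T ⊆ K) (hT : IsCompact T) {ξ : EuclideanSpace ℝ (Fin d)} {a : ℝ}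
    (hvol : μ (K ∩ {p | ⟪p, ξ⟫_ℝ ≤ a}) = μ T) :
    ⟪ξ, centroid μ (K ∩ {p | ⟪p, ξ⟫_ℝ ≤ a})⟫_ℝ ≤ ⟪ξ, centroid μ T⟫_ℝ := by
  have hS : IsCompact (K ∩ {p | ⟪p, ξ⟫_ℝ ≤ a}) :=
    hK.inter_right (isClosed_le (by fun_prop) continuous_const)
  rw [inner_centroid μ (continuous_id.continuousOn.integrableOn_compact hS),
    inner_centroid μ (continuous_id.continuousOn.integrableOn_compact hT), hvol]
  refine mul_le_mul_of_nonneg_left ?_ (inv_nonneg.mpr ENNReal.toReal_nonneg)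
  have hf : Continuous fun x : EuclideanSpace ℝ (Fin d) ↦ ⟪ξ, x⟫_ℝ := by fun_prop
  refine setIntegral_le_setIntegral_of_measure_eq (a := a) hS.measurableSet hT.measurableSet
    hvol hS.measure_lt_top.ne (hf.continuousOn.integrableOn_compact hS)
    (hf.continuousOn.integrableOn_compact hT) ?_ ?_
  · rintro x ⟨⟨-, hx⟩, -⟩
    rwa [real_inner_comm]
  · rintro x ⟨hxT, hxS⟩
    rw [real_inner_comm]
    exact le_of_not_ge fun hx ↦ hxS ⟨hTK hxT, hx⟩

theorem notMem_interior_of_subset_halfSpace {E : Type*} [NormedAddCommGroup E]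
    [InnerProductSpace ℝ E] {s : Set E} {c ξ : E} (hξ : ξ ≠ 0)
    (hs : s ⊆ {x | ⟪ξ, c⟫_ℝ ≤ ⟪ξ, x⟫_ℝ}) : c ∉ interior s := by
  intro hc
  have hmin : IsLocalMin (innerSL ℝ ξ) c := mem_of_superset (mem_interior_iff_mem_nhds.mp hc) hs
  have hzero := hmin.hasFDerivAt_eq_zero (innerSL ℝ ξ).hasFDerivAt
  exact hξ (by simpa using congr($hzero ξ))

theorem dupin_first_convexity_general
    (d : ℕ)
    (K : Set (EuclideanSpace ℝ (Fin d)))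
    (hKcomp : IsCompact K)
    (δ : ℝ)
    (t : EuclideanSpace ℝ (Fin d) → ℝ)
    (ht : ∀ ξ : EuclideanSpace ℝ (Fin d), ‖ξ‖ = 1 →
      volume (K ∩ {p | ⟪p, ξ⟫_ℝ ≤ t ξ}) = ENNReal.ofReal δ) :
    ∀ ξ : EuclideanSpace ℝ (Fin d), ‖ξ‖ = 1 →
      centroid volume (K ∩ {p | ⟪p, ξ⟫_ℝ ≤ t ξ}) ∉
        interior (convexHull ℝ
          {x : EuclideanSpace ℝ (Fin d) | ∃ η : EuclideanSpace ℝ (Fin d), ‖η‖ = 1 ∧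
            x = centroid volume (K ∩ {p | ⟪p, η⟫_ℝ ≤ t η})}) := by
  intro ξ hξ
  refine notMem_interior_of_subset_halfSpace (ξ := ξ) (norm_ne_zero_iff.mp (by simp [hξ])) ?_
  refine convexHull_min ?_ (convex_halfSpace_ge (innerSL ℝ ξ).isLinear _)
  rintro _ ⟨η, hη, rfl⟩
  exact inner_centroid_inter_halfSpace_le hKcomp inter_subset_left
    (hKcomp.inter_right (isClosed_le (by fun_prop) continuous_const))
    ((ht ξ hξ).trans (ht η hη).symm)

theorem dupin_first_convexity
    (d : ℕ) (hd : 2 ≤ d)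
    (K : Set (EuclideanSpace ℝ (Fin d)))
    (hKcomp : IsCompact K) (hKconv : Convex ℝ K) (hKint : (interior K).Nonempty)
    (δ : ℝ) (hδ : 0 < δ) (hδK : ENNReal.ofReal δ < volume K)
    (t : EuclideanSpace ℝ (Fin d) → ℝ)
    (ht : ∀ ξ : EuclideanSpace ℝ (Fin d), ‖ξ‖ = 1 →
      volume (K ∩ {p | ⟪p, ξ⟫_ℝ ≤ t ξ}) = ENNReal.ofReal δ) :
    ∀ ξ : EuclideanSpace ℝ (Fin d), ‖ξ‖ = 1 →
      centroid volume (K ∩ {p | ⟪p, ξ⟫_ℝ ≤ t ξ}) ∉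
        interior (convexHull ℝ
          {x : EuclideanSpace ℝ (Fin d) | ∃ η : EuclideanSpace ℝ (Fin d), ‖η‖ = 1 ∧
            x = centroid volume (K ∩ {p | ⟪p, η⟫_ℝ ≤ t η})}) :=
  dupin_first_convexity_general d K hKcomp δ t ht
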